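/- Define σ̄² = ℓ · C(n,2ℓ) · C(n-2,2ℓ-2) · (2ℓ-1)!! · (2ℓ-3)!! · (p^{2ℓ-1} - p^{2ℓ}). If 1-p = Ω(1) and ℓ = o(n√p), then the variance of the number X_{n,ℓ} of ℓ-matchings in G(n,p) satisfies Var(X_{n,ℓ}) ~ σ̄². -/

import Mathlib

open Finset Nat

/-- A matching in `K_n`: a set of non-loop edges that are pairwise vertex-disjoint. -/
def IsMatching {n : ℕ} (M : Finset (Sym2 (Fin n))) : Prop :=
  (∀ e ∈ M, ¬ e.IsDiag) ∧
    ∀ e ∈ M, ∀ f ∈ M, e ≠ f → ∀ v : Fin n, v ∈ e → v ∉ f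

/-- The edge set of the complete graph on `n` vertices. -/
def edgeSet (n : ℕ) : Finset (Sym2 (Fin n)) :=
  Finset.univ.filter fun e => ¬ e.IsDiag

/-- The probability of a particular graph `G ⊆ E(K_n)` in `G(n,p)`. -/
noncomputable def erWeight (n : ℕ) (p : ℝ) (G : Finset (Sym2 (Fin n))) : ℝ :=
  p ^ G.card * (1 - p) ^ ((edgeSet n).card - G.card)

/-- Expectation of a function of the random graph `G(n,p)`. -/
noncomputable def erExp (n : ℕ) (p : ℝ) (f : Finset (Sym2 (Fin n)) → ℝ) : ℝ :=
  ∑ G ∈ (edgeSet n).powerset, erWeight n p G * f G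

/-- Number of `ℓ`-matchings contained in a graph `G`. -/
noncomputable def matchCount (n ℓ : ℕ) (G : Finset (Sym2 (Fin n))) : ℝ :=
  Nat.card {M : Finset (Sym2 (Fin n)) // IsMatching M ∧ M.card = ℓ ∧ M ⊆ G}

/-- Variance of the number of `ℓ`-matchings in `G(n,p)`. -/
noncomputable def erVar (n ℓ : ℕ) (p : ℝ) : ℝ :=
  erExp n p (fun G => (matchCount n ℓ G - erExp n p (matchCount n ℓ)) ^ 2)

/-- The quantity `σ̄² = ℓ C(n,2ℓ) C(n-2,2ℓ-2) (2ℓ-1)‼ (2ℓ-3)‼ (p^{2ℓ-1} - p^{2ℓ})`. -/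
noncomputable def sigmaBarSq (n ℓ : ℕ) (p : ℝ) : ℝ :=
  (ℓ : ℝ) * n.choose (2 * ℓ) * (n - 2).choose (2 * ℓ - 2) *
    (2 * ℓ - 1)‼ * (2 * ℓ - 3)‼ * (p ^ (2 * ℓ - 1) - p ^ (2 * ℓ))

/-!
Write `X = ∑_M 1{M ⊆ G}` over the `ℓ`-matchings `M` of `K_n`. Then
`Var X = ∑_{M,M'} (p^(2ℓ-κ) - p^(2ℓ))` with `κ = |M ∩ M'|`. The first-order part `κ p^(2ℓ-1) (1-p)`
of each term sums exactly to `σ̄²`: for a fixed `M`, `∑_{M'} C(κ, j) = C(ℓ, j) m(n-2j, ℓ-j)`, where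
`m(a, k) = C(a, 2k) (2k-1)‼` counts the `k`-matchings of `K_a`. The remainder of a term is at most
`(κ-1) p^(2ℓ-κ) (1-p)`, and the binomial moments above decay geometrically in `j`, each step costing
at most `2ℓ²/(n-2ℓ)²`. So `0 ≤ Var X - σ̄² ≤ q/(1-q)² σ̄²` with `q = 2ℓ²/((n-2ℓ)² p)`, and
`q = O((ℓ/(n√p))²) → 0`.
-/

section Matchings

variable {n : ℕ}

def vertexSet (S : Finset (Sym2 (Fin n))) : Finset (Fin n) := S.biUnion Sym2.toFinset

@[simp] lemma mem_vertexSet {S : Finset (Sym2 (Fin n))} {v : Fin n} :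
    v ∈ vertexSet S ↔ ∃ e ∈ S, v ∈ e := by
  simp [vertexSet, Sym2.mem_toFinset]

lemma vertexSet_union (S T : Finset (Sym2 (Fin n))) :
    vertexSet (S ∪ T) = vertexSet S ∪ vertexSet T :=
  union_biUnion

lemma vertexSet_mono {S T : Finset (Sym2 (Fin n))} (h : S ⊆ T) : vertexSet S ⊆ vertexSet T :=
  biUnion_subset_biUnion_of_subset_left _ h

lemma disjoint_of_disjoint_vertexSet {S T : Finset (Sym2 (Fin n))}
    (h : Disjoint (vertexSet S) (vertexSet T)) : Disjoint S T :=
  disjoint_left.mpr fun e heS heT => disjoint_left.mp h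
    (mem_vertexSet.mpr ⟨e, heS, Sym2.out_fst_mem e⟩)
    (mem_vertexSet.mpr ⟨e, heT, Sym2.out_fst_mem e⟩)

namespace IsMatching

variable {M S T : Finset (Sym2 (Fin n))}

lemma subset (hM : IsMatching M) (h : S ⊆ M) : IsMatching S :=
  ⟨fun e he => hM.1 e (h he), fun e he f hf hef => hM.2 e (h he) f (h hf) hef⟩

lemma eq_of_mem_of_mem (hM : IsMatching M) {e f : Sym2 (Fin n)} {v : Fin n} (he : e ∈ M)
    (hf : f ∈ M) (hve : v ∈ e) (hvf : v ∈ f) : e = f := by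
  by_contra hef
  exact hM.2 e he f hf hef v hve hvf

lemma subset_edgeSet (hM : IsMatching M) : M ⊆ edgeSet n := fun e he => by
  simp [edgeSet, hM.1 e he]

lemma card_vertexSet (hM : IsMatching M) : #(vertexSet M) = 2 * #M := by
  rw [vertexSet, card_biUnion, mul_comm, ← smul_eq_mul, ← sum_const]
  · exact sum_congr rfl fun e he => Sym2.card_toFinset_of_not_isDiag e (hM.1 e he)
  · intro e he f hf hef
    refine disjoint_left.mpr fun v hve hvf => hef ?_
    exact hM.eq_of_mem_of_mem he hf (Sym2.mem_toFinset.mp hve) (Sym2.mem_toFinset.mp hvf)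

lemma union (hS : IsMatching S) (hT : IsMatching T) (h : Disjoint (vertexSet S) (vertexSet T)) :
    IsMatching (S ∪ T) := by
  refine ⟨fun e he => (mem_union.mp he).elim (hS.1 e) (hT.1 e), ?_⟩
  intro e he f hf hef v hve hvf
  have hcross : ∀ {e f}, e ∈ S → f ∈ T → v ∈ e → v ∉ f := fun he hf hve hvf =>
    disjoint_left.mp h (mem_vertexSet.mpr ⟨_, he, hve⟩) (mem_vertexSet.mpr ⟨_, hf, hvf⟩)
  rcases mem_union.mp he with he | he <;> rcases mem_union.mp hf with hf | hf
  · exact hS.2 e he f hf hef v hve hvf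
  · exact hcross he hf hve hvf
  · exact hcross hf he hvf hve
  · exact hT.2 e he f hf hef v hve hvf

lemma disjoint_vertexSet_sdiff (hM : IsMatching M) (h : S ⊆ M) :
    Disjoint (vertexSet (M \ S)) (vertexSet S) := by
  refine disjoint_left.mpr fun v hv hv' => ?_
  obtain ⟨e, he, hve⟩ := mem_vertexSet.mp hv
  obtain ⟨f, hf, hvf⟩ := mem_vertexSet.mp hv'
  rw [mem_sdiff] at he
  exact he.2 (hM.eq_of_mem_of_mem he.1 (h hf) hve hvf ▸ hf)

end IsMatching

lemma isMatching_singleton {e : Sym2 (Fin n)} (he : ¬ e.IsDiag) : IsMatching {e} :=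
  ⟨by simpa using he, fun e₁ he₁ e₂ he₂ hne => by simp_all⟩

open scoped Classical in
noncomputable def matchingsOn (k : ℕ) (A : Finset (Fin n)) : Finset (Finset (Sym2 (Fin n))) :=
  {M | IsMatching M ∧ #M = k ∧ vertexSet M ⊆ A}

@[simp] lemma mem_matchingsOn {k : ℕ} {A : Finset (Fin n)} {M : Finset (Sym2 (Fin n))} :
    M ∈ matchingsOn k A ↔ IsMatching M ∧ #M = k ∧ vertexSet M ⊆ A := by
  simp [matchingsOn]

lemma card_filter_superset_matchingsOn {k : ℕ} {A : Finset (Fin n)} {S : Finset (Sym2 (Fin n))}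
    (hS : IsMatching S) (hSA : vertexSet S ⊆ A) (hk : #S ≤ k) :
    #{M ∈ matchingsOn k A | S ⊆ M} = #(matchingsOn (k - #S) (A \ vertexSet S)) := by
  refine card_bij' (fun M _ => M \ S) (fun M' _ => M' ∪ S) ?_ ?_ ?_ ?_
  · intro M hM
    obtain ⟨⟨hMm, hMk, hMA⟩, hSM⟩ := by simpa using hM
    refine mem_matchingsOn.mpr ⟨hMm.subset sdiff_subset, ?_, ?_⟩
    · rw [card_sdiff_of_subset hSM, hMk]
    · exact subset_sdiff.mpr
        ⟨(vertexSet_mono sdiff_subset).trans hMA, hMm.disjoint_vertexSet_sdiff hSM⟩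
  · intro M' hM'
    obtain ⟨hM'm, hM'k, hM'A⟩ := mem_matchingsOn.mp hM'
    have hdisj := (subset_sdiff.mp hM'A).2
    refine mem_filter.mpr ⟨mem_matchingsOn.mpr ⟨hM'm.union hS hdisj, ?_, ?_⟩,
      subset_union_right⟩
    · rw [card_union_of_disjoint (disjoint_of_disjoint_vertexSet hdisj), hM'k]
      omega
    · rw [vertexSet_union]
      exact union_subset ((subset_sdiff.mp hM'A).1) hSA
  · intro M hM
    exact sdiff_union_of_subset (mem_filter.mp hM).2
  · intro M' hM'
    exact union_sdiff_cancel_right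
      (disjoint_of_disjoint_vertexSet (subset_sdiff.mp (mem_matchingsOn.mp hM').2.2).2)

def numMatchings (a k : ℕ) : ℕ := a.choose (2 * k) * (2 * k - 1)‼

lemma numMatchings_pos {a k : ℕ} (h : 2 * k ≤ a) : 0 < numMatchings a k :=
  Nat.mul_pos (Nat.choose_pos h) (Nat.doubleFactorial_pos _)

lemma numMatchings_succ (a k : ℕ) :
    numMatchings a (k + 1) = a.choose (2 * k + 2) * ((2 * k + 1) * (2 * k - 1)‼) := by
  rw [numMatchings, ← Nat.doubleFactorial_add_one]
  rfl

lemma numMatchings_succ_succ (b k : ℕ) :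
    numMatchings (b + 1) (k + 1) = numMatchings b (k + 1) + b * numMatchings (b - 1) k := by
  have hb : b * (b - 1).choose (2 * k) = b.choose (2 * k + 1) * (2 * k + 1) := by
    cases b with
    | zero => simp
    | succ c => simpa using Nat.add_one_mul_choose_eq c (2 * k)
  rw [numMatchings_succ, numMatchings_succ, numMatchings, Nat.choose_succ_succ', ← mul_assoc b, hb]
  ring

lemma succ_mul_numMatchings (a k : ℕ) :
    (2 * k + 2) * numMatchings a (k + 1) = a * (a - 1) * numMatchings (a - 2) k := by
  rcases a with _ | _ | c
  · simp [numMatchings, Nat.choose_eq_zero_of_lt (show 0 < 2 * (k + 1) by omega)]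
  · simp [numMatchings, Nat.choose_eq_zero_of_lt (show 1 < 2 * (k + 1) by omega)]
  have h1 := Nat.add_one_mul_choose_eq (c + 1) (2 * k + 1)
  have h2 := Nat.add_one_mul_choose_eq c (2 * k)
  rw [numMatchings_succ, numMatchings, show c + 1 + 1 - 2 = c by omega, Nat.add_sub_cancel]
  calc (2 * k + 2) * ((c + 1 + 1).choose (2 * k + 2) * ((2 * k + 1) * (2 * k - 1)‼))
      = (c + 1 + 1).choose (2 * k + 1 + 1) * (2 * k + 1 + 1) * (2 * k + 1) * (2 * k - 1)‼ := by
        ring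
    _ = (c + 1 + 1) * ((c + 1).choose (2 * k + 1) * (2 * k + 1)) * (2 * k - 1)‼ := by
        rw [← h1]; ring
    _ = (c + 1 + 1) * (c + 1) * (c.choose (2 * k) * (2 * k - 1)‼) := by
        rw [← h2]; ring

lemma matchingsOn_zero (A : Finset (Fin n)) : matchingsOn 0 A = {∅} := by
  ext M
  simp only [mem_matchingsOn, Finset.card_eq_zero, mem_singleton]
  constructor
  · exact fun h => h.2.1
  · rintro rfl
    exact ⟨⟨by simp, by simp⟩, rfl, by simp [vertexSet]⟩

lemma matchingsOn_succ_empty (k : ℕ) : matchingsOn (k + 1) (∅ : Finset (Fin n)) = ∅ := by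
  refine eq_empty_of_forall_notMem fun M hM => ?_
  obtain ⟨-, hMk, hMA⟩ := mem_matchingsOn.mp hM
  obtain ⟨e, he⟩ := card_pos.mp (by rw [hMk]; omega)
  exact notMem_empty _ (hMA (mem_vertexSet.mpr ⟨e, he, Sym2.out_fst_mem e⟩))

lemma filter_notMem_vertexSet_matchingsOn (k : ℕ) (A : Finset (Fin n)) (v : Fin n) :
    {M ∈ matchingsOn k A | v ∉ vertexSet M} = matchingsOn k (A.erase v) := by
  ext M
  simp only [mem_filter, mem_matchingsOn, subset_erase]
  tauto

lemma filter_mem_vertexSet_matchingsOn (k : ℕ) (A : Finset (Fin n)) (v : Fin n) :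
    {M ∈ matchingsOn k A | v ∈ vertexSet M}
      = (A.erase v).biUnion fun w => {M ∈ matchingsOn k A | {s(v, w)} ⊆ M} := by
  ext M
  simp only [mem_filter, mem_biUnion, singleton_subset_iff, mem_vertexSet]
  constructor
  · rintro ⟨hM, e, he, hve⟩
    obtain ⟨w, rfl⟩ := Sym2.mem_iff_exists.mp hve
    have hwv : w ≠ v := fun h => (mem_matchingsOn.mp hM).1.1 _ he (Sym2.mk_isDiag_iff.mpr h.symm)
    have hwA : w ∈ A :=
      (mem_matchingsOn.mp hM).2.2 (mem_vertexSet.mpr ⟨_, he, Sym2.mem_mk_right v w⟩)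
    exact ⟨w, mem_erase.mpr ⟨hwv, hwA⟩, hM, he⟩
  · rintro ⟨w, -, hM, he⟩
    exact ⟨hM, _, he, Sym2.mem_mk_left v w⟩

theorem card_matchingsOn (k : ℕ) (A : Finset (Fin n)) :
    #(matchingsOn k A) = numMatchings #A k := by
  induction A using strongInduction generalizing k with
  | H A ih =>
  rcases k with _ | k
  · simp [matchingsOn_zero, numMatchings]
  rcases A.eq_empty_or_nonempty with rfl | ⟨v, hv⟩
  · simp [matchingsOn_succ_empty, numMatchings, Nat.choose_eq_zero_of_lt]
  have hA : #A = #A - 1 + 1 := (Nat.succ_pred_eq_of_pos (card_pos.mpr ⟨v, hv⟩)).symm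
  have hcover : ∀ w ∈ A.erase v, #{M ∈ matchingsOn (k + 1) A | {s(v, w)} ⊆ M}
      = numMatchings (#A - 2) k := by
    intro w hw
    obtain ⟨hwv, hwA⟩ := mem_erase.mp hw
    have hvw : ¬ (s(v, w)).IsDiag := fun h => hwv (Sym2.mk_isDiag_iff.mp h).symm
    have hsub : vertexSet {s(v, w)} ⊆ A := by
      simp [vertexSet, Sym2.toFinset_mk_eq, insert_subset_iff, hv, hwA]
    rw [card_filter_superset_matchingsOn (isMatching_singleton hvw) hsub (by simp),
      ih _ (sdiff_ssubset hsub ⟨v, by simp⟩), card_sdiff_of_subset hsub,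
      (isMatching_singleton hvw).card_vertexSet]
    simp
  have hdisj : (A.erase v : Set (Fin n)).PairwiseDisjoint
      fun w => {M ∈ matchingsOn (k + 1) A | {s(v, w)} ⊆ M} := by
    intro w₁ _ w₂ _ hne
    refine disjoint_left.mpr fun M hM₁ hM₂ => hne ?_
    simp only [mem_filter, singleton_subset_iff] at hM₁ hM₂
    exact Sym2.congr_right.mp ((mem_matchingsOn.mp hM₁.1).1.eq_of_mem_of_mem hM₁.2 hM₂.2
      (Sym2.mem_mk_left v w₁) (Sym2.mem_mk_left v w₂))
  rw [← card_filter_add_card_filter_not (fun M => v ∈ vertexSet M),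
    filter_mem_vertexSet_matchingsOn, filter_notMem_vertexSet_matchingsOn,
    card_biUnion hdisj, sum_congr rfl hcover, ih _ (erase_ssubset hv),
    sum_const, card_erase_of_mem hv, smul_eq_mul, hA, numMatchings_succ_succ]
  simp only [Nat.add_sub_cancel, show #A - 1 + 1 - 2 = #A - 1 - 1 by omega]
  ring

noncomputable abbrev matchings (n ℓ : ℕ) : Finset (Finset (Sym2 (Fin n))) := matchingsOn ℓ univ

def overlapCount (n ℓ j : ℕ) : ℕ := ℓ.choose j * numMatchings (n - 2 * j) (ℓ - j)

lemma card_filter_superset_matchings {ℓ : ℕ} {S : Finset (Sym2 (Fin n))} (hS : IsMatching S)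
    (hk : #S ≤ ℓ) :
    #{M ∈ matchings n ℓ | S ⊆ M} = numMatchings (n - 2 * #S) (ℓ - #S) := by
  rw [card_filter_superset_matchingsOn hS (subset_univ _) hk, card_matchingsOn,
    card_sdiff_of_subset (subset_univ _), hS.card_vertexSet, Finset.card_univ,
    Fintype.card_fin]

theorem sum_choose_card_inter {ℓ : ℕ} {M : Finset (Sym2 (Fin n))}
    (hM : M ∈ matchings n ℓ) (j : ℕ) :
    ∑ M' ∈ matchings n ℓ, (#(M ∩ M')).choose j = overlapCount n ℓ j := by
  classical
  obtain ⟨hMm, hMk, -⟩ := mem_matchingsOn.mp hM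
  calc ∑ M' ∈ matchings n ℓ, (#(M ∩ M')).choose j
      = ∑ M' ∈ matchings n ℓ, ∑ S ∈ M.powersetCard j, if S ⊆ M' then 1 else 0 := by
        refine sum_congr rfl fun M' _ => ?_
        rw [← card_powersetCard, sum_boole]
        congr 1
        ext S
        simp [subset_inter_iff, _root_.and_right_comm]
    _ = ∑ S ∈ M.powersetCard j, numMatchings (n - 2 * j) (ℓ - j) := by
        rw [sum_comm]
        refine sum_congr rfl fun S hS => ?_
        obtain ⟨hSM, hSj⟩ := mem_powersetCard.mp hS
        rw [sum_boole, Nat.cast_id, card_filter_superset_matchings (hMm.subset hSM)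
          (hMk ▸ card_le_card hSM), hSj]
    _ = overlapCount n ℓ j := by
        rw [sum_const, card_powersetCard, hMk, smul_eq_mul, overlapCount]

lemma overlapCount_succ_mul_le (n ℓ j : ℕ) :
    overlapCount n ℓ (j + 1) * (n - 2 * ℓ) ^ 2 ≤ 2 * ℓ ^ 2 * overlapCount n ℓ j := by
  rcases le_or_gt ℓ j with hj | hj
  · simp [overlapCount, Nat.choose_eq_zero_of_lt (Nat.lt_succ_of_le hj)]
  have hstep : overlapCount n ℓ (j + 1) * ((j + 1) * ((n - 2 * j) * (n - 2 * j - 1)))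
      = 2 * (ℓ - j) ^ 2 * overlapCount n ℓ j := by
    obtain ⟨k, hk⟩ : ∃ k, ℓ - j = k + 1 := ⟨ℓ - j - 1, by omega⟩
    have hchoose := Nat.choose_succ_right_eq ℓ j
    have hmatch := succ_mul_numMatchings (n - 2 * j) k
    rw [overlapCount, overlapCount, hk, show ℓ - (j + 1) = k by omega,
      show n - 2 * (j + 1) = n - 2 * j - 2 by omega]
    set a := n - 2 * j
    calc ℓ.choose (j + 1) * numMatchings (a - 2) k * ((j + 1) * (a * (a - 1)))
        = ℓ.choose (j + 1) * (j + 1) * (a * (a - 1) * numMatchings (a - 2) k) := by ring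
      _ = 2 * (k + 1) ^ 2 * (ℓ.choose j * numMatchings (n - 2 * j) (k + 1)) := by
          rw [hchoose, ← hmatch, hk]; ring
  have hbound : (n - 2 * ℓ) ^ 2 ≤ (j + 1) * ((n - 2 * j) * (n - 2 * j - 1)) :=
    calc (n - 2 * ℓ) ^ 2 ≤ 1 * ((n - 2 * j) * (n - 2 * j - 1)) := by
          rw [one_mul, sq]; exact Nat.mul_le_mul (by omega) (by omega)
      _ ≤ _ := Nat.mul_le_mul_right _ (by omega)
  calc overlapCount n ℓ (j + 1) * (n - 2 * ℓ) ^ 2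
      ≤ overlapCount n ℓ (j + 1) * ((j + 1) * ((n - 2 * j) * (n - 2 * j - 1))) :=
        Nat.mul_le_mul_left _ hbound
    _ = 2 * (ℓ - j) ^ 2 * overlapCount n ℓ j := hstep
    _ ≤ 2 * ℓ ^ 2 * overlapCount n ℓ j := by gcongr; omega

lemma overlapCount_succ_le {ℓ : ℕ} (hn : 2 * ℓ < n) (i : ℕ) :
    (overlapCount n ℓ (i + 1) : ℝ)
      ≤ overlapCount n ℓ 1 * (2 * ℓ ^ 2 / ((n : ℝ) - 2 * ℓ) ^ 2) ^ i := by
  have hpos : (0 : ℝ) < ((n : ℝ) - 2 * ℓ) ^ 2 := by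
    have : (2 * ℓ : ℝ) < n := by exact_mod_cast hn
    nlinarith
  induction i with
  | zero => simp
  | succ i ih =>
    have hstep : (overlapCount n ℓ (i + 2) : ℝ) * ((n : ℝ) - 2 * ℓ) ^ 2
        ≤ 2 * ℓ ^ 2 * overlapCount n ℓ (i + 1) := by
      have := overlapCount_succ_mul_le n ℓ (i + 1)
      rw [← Nat.cast_le (α := ℝ)] at this
      push_cast [Nat.cast_sub hn.le] at this
      exact this
    calc (overlapCount n ℓ (i + 2) : ℝ)
        ≤ 2 * ℓ ^ 2 / ((n : ℝ) - 2 * ℓ) ^ 2 * overlapCount n ℓ (i + 1) := by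
          rw [div_mul_eq_mul_div, le_div_iff₀ hpos]; exact hstep
      _ ≤ 2 * ℓ ^ 2 / ((n : ℝ) - 2 * ℓ) ^ 2 *
            (overlapCount n ℓ 1 * (2 * ℓ ^ 2 / ((n : ℝ) - 2 * ℓ) ^ 2) ^ i) := by gcongr
      _ = overlapCount n ℓ 1 * (2 * ℓ ^ 2 / ((n : ℝ) - 2 * ℓ) ^ 2) ^ (i + 1) := by ring

end Matchings

section RandomGraph

variable {n : ℕ}

lemma erExp_sum {ι : Type*} (p : ℝ) (s : Finset ι) (f : ι → Finset (Sym2 (Fin n)) → ℝ) :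
    erExp n p (fun G => ∑ i ∈ s, f i G) = ∑ i ∈ s, erExp n p (f i) := by
  simp only [erExp, mul_sum]
  exact sum_comm

theorem erExp_indicator_subset (p : ℝ) {S : Finset (Sym2 (Fin n))} (hS : S ⊆ edgeSet n) :
    erExp n p (fun G => if S ⊆ G then 1 else 0) = p ^ #S := by
  classical
  have hweight : ∀ H ∈ (edgeSet n \ S).powerset, erWeight n p (S ∪ H)
      = p ^ #S * (p ^ #H * (1 - p) ^ (#(edgeSet n \ S) - #H)) := by
    intro H hH
    have hHS := mem_powerset.mp hH
    have hcard := card_le_card hHS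
    rw [erWeight, card_union_of_disjoint (disjoint_of_subset_right hHS
      disjoint_sdiff), card_sdiff_of_subset hS, pow_add, mul_assoc] at *
    congr 3
    omega
  have hinj : Set.InjOn (S ∪ ·) ((edgeSet n \ S).powerset : Set (Finset (Sym2 (Fin n)))) := by
    intro H₁ h₁ H₂ h₂ h
    simp only [coe_powerset, Set.mem_preimage, Set.mem_powerset_iff, coe_subset] at h₁ h₂
    rw [← union_sdiff_cancel_left (disjoint_of_subset_right h₁ disjoint_sdiff),
      ← union_sdiff_cancel_left (disjoint_of_subset_right h₂ disjoint_sdiff)]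
    exact congrArg (· \ S) h
  rw [erExp]
  simp only [mul_ite, mul_one, mul_zero]
  rw [← sum_filter, show {G ∈ (edgeSet n).powerset | S ⊆ G} = Icc S (edgeSet n) by
      ext G; simp [and_comm], Icc_eq_image_powerset hS, sum_image hinj,
    sum_congr rfl hweight, ← mul_sum, sum_pow_mul_eq_add_pow]
  simp

lemma erExp_sub_sq (p : ℝ) (f : Finset (Sym2 (Fin n)) → ℝ) :
    erExp n p (fun G => (f G - erExp n p f) ^ 2)
      = erExp n p (fun G => f G ^ 2) - erExp n p f ^ 2 := by
  have hone : ∑ G ∈ (edgeSet n).powerset, erWeight n p G = 1 := by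
    simpa [erExp] using erExp_indicator_subset (n := n) p (empty_subset _)
  set c := erExp n p f
  calc erExp n p (fun G => (f G - c) ^ 2)
      = erExp n p (fun G => f G ^ 2) - 2 * c * erExp n p f
          + c ^ 2 * ∑ G ∈ (edgeSet n).powerset, erWeight n p G := by
        simp only [erExp, mul_sum, ← sum_sub_distrib, ← sum_add_distrib]
        exact sum_congr rfl fun G _ => by ring
    _ = erExp n p (fun G => f G ^ 2) - c ^ 2 := by rw [hone]; ring

lemma matchCount_eq_sum (ℓ : ℕ) (G : Finset (Sym2 (Fin n))) :
    matchCount n ℓ G = ∑ M ∈ matchings n ℓ, if M ⊆ G then 1 else 0 := by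
  classical
  rw [matchCount, Nat.card_eq_fintype_card, Fintype.card_subtype, sum_boole]
  congr 2
  ext M
  simp [and_assoc]

theorem erVar_eq_sum (n ℓ : ℕ) (p : ℝ) :
    erVar n ℓ p = ∑ M ∈ matchings n ℓ,
      ∑ M' ∈ matchings n ℓ, (p ^ (2 * ℓ - #(M ∩ M')) - p ^ (2 * ℓ)) := by
  classical
  set 𝓜 := matchings n ℓ
  have hmean : erExp n p (matchCount n ℓ) = ∑ _M ∈ 𝓜, p ^ ℓ := by
    simp only [funext (matchCount_eq_sum ℓ), erExp_sum]
    refine sum_congr rfl fun M hM => ?_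
    obtain ⟨hMm, hMk, -⟩ := mem_matchingsOn.mp hM
    rw [erExp_indicator_subset p hMm.subset_edgeSet, hMk]
  have hsq : erExp n p (fun G => matchCount n ℓ G ^ 2)
      = ∑ M ∈ 𝓜, ∑ M' ∈ 𝓜, p ^ (2 * ℓ - #(M ∩ M')) := by
    simp only [matchCount_eq_sum, sq, sum_mul_sum, ite_zero_mul_ite_zero, mul_one,
      ← union_subset_iff, erExp_sum]
    refine sum_congr rfl fun M hM => sum_congr rfl fun M' hM' => ?_
    obtain ⟨hMm, hMk, -⟩ := mem_matchingsOn.mp hM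
    obtain ⟨hM'm, hM'k, -⟩ := mem_matchingsOn.mp hM'
    rw [erExp_indicator_subset p (union_subset hMm.subset_edgeSet hM'm.subset_edgeSet)]
    have := card_union_add_card_inter M M'
    congr 1
    omega
  rw [erVar, erExp_sub_sq, hsq, hmean, sq, sum_mul_sum, ← sum_sub_distrib]
  refine sum_congr rfl fun M _ => ?_
  rw [← sum_sub_distrib, ← pow_add, ← two_mul]

end RandomGraph

lemma one_sub_pow_succ_sub_eq (p : ℝ) (k : ℕ) :
    1 - p ^ (k + 1) - (k + 1) * p ^ k * (1 - p) = (1 - p) * ∑ i ∈ range k, (p ^ i - p ^ k) := by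
  rw [sum_sub_distrib, sum_const, card_range, nsmul_eq_mul]
  linear_combination geom_sum_mul p k

lemma pow_sub_remainder_mem_Icc {p : ℝ} (hp0 : 0 ≤ p) (hp1 : p ≤ 1) {m j : ℕ} (hj : j ≤ m) :
    p ^ (m - j) - p ^ m - j * p ^ (m - 1) * (1 - p) ∈
      Set.Icc 0 ((j - 1 : ℕ) * p ^ (m - j) * (1 - p)) := by
  rcases j with _ | k
  · simp
  set a := p ^ (m - (k + 1))
  have hm : p ^ m = a * p ^ (k + 1) := by rw [← pow_add]; congr 1; omega
  have hm1 : p ^ (m - 1) = a * p ^ k := by rw [← pow_add]; congr 1; omega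
  have hterm : ∀ i ∈ range k, p ^ i - p ^ k ∈ Set.Icc (0 : ℝ) 1 := fun i hi =>
    ⟨sub_nonneg.mpr (pow_le_pow_of_le_one hp0 hp1 (mem_range.mp hi).le),
      by linarith [pow_le_one₀ (n := i) hp0 hp1, pow_nonneg hp0 k]⟩
  have hsum_le : ∑ i ∈ range k, (p ^ i - p ^ k) ≤ k := by
    simpa using sum_le_sum fun i hi => (hterm i hi).2
  have ha : 0 ≤ a * (1 - p) := mul_nonneg (pow_nonneg hp0 _) (by linarith)
  have hrem : a - p ^ m - ((k + 1 : ℕ) : ℝ) * p ^ (m - 1) * (1 - p)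
      = a * (1 - p) * ∑ i ∈ range k, (p ^ i - p ^ k) := by
    rw [hm, hm1, mul_assoc a, ← one_sub_pow_succ_sub_eq]
    push_cast
    ring
  rw [hrem, Nat.add_sub_cancel]
  exact ⟨mul_nonneg ha (sum_nonneg fun i hi => (hterm i hi).1),
    by linarith [mul_le_mul_of_nonneg_left hsum_le ha]⟩

lemma sum_range_mul_pow_le {q : ℝ} (hq0 : 0 ≤ q) (hq1 : q < 1) (m : ℕ) :
    ∑ i ∈ range m, (i : ℝ) * q ^ i ≤ q / (1 - q) ^ 2 := by
  have hnorm : ‖q‖ < 1 := by rwa [Real.norm_of_nonneg hq0]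
  rw [← tsum_coe_mul_geometric_of_norm_lt_one hnorm]
  exact (by simpa using summable_pow_mul_geometric_of_norm_lt_one 1 hnorm :
    Summable fun i : ℕ => (i : ℝ) * q ^ i).sum_le_tsum _ fun i _ => by positivity

-- Bounds the ratio of consecutive terms `overlapCount n ℓ j * p ^ (2ℓ - j)`
-- (`overlapCount_succ_mul_pow_le`).
noncomputable def overlapRatio (n ℓ : ℕ) (p : ℝ) : ℝ := 2 * ℓ ^ 2 / (((n : ℝ) - 2 * ℓ) ^ 2 * p)

section Estimate

variable {n ℓ : ℕ} {p : ℝ}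

lemma sigmaBarSq_eq (hℓ : 1 ≤ ℓ) :
    sigmaBarSq n ℓ p = numMatchings n ℓ * overlapCount n ℓ 1 * (p ^ (2 * ℓ - 1) * (1 - p)) := by
  have hp : p ^ (2 * ℓ) = p ^ (2 * ℓ - 1) * p := by rw [← pow_succ]; congr 1; omega
  rw [sigmaBarSq, hp, numMatchings, overlapCount, numMatchings, Nat.choose_one_right,
    show 2 * (ℓ - 1) = 2 * ℓ - 2 by omega, show 2 * ℓ - 2 - 1 = 2 * ℓ - 3 by omega,
    show 2 * 1 = 2 from rfl]
  push_cast
  ring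

lemma sum_le_sum_overlapCount_mul {M : Finset (Sym2 (Fin n))}
    (hM : M ∈ matchings n ℓ) {h : ℕ → ℝ} (hh : ∀ j, 0 ≤ h j) :
    ∑ M' ∈ matchings n ℓ, h #(M ∩ M')
      ≤ ∑ j ∈ range (ℓ + 1), overlapCount n ℓ j * h j := by
  have hle : ∀ M' ∈ matchings n ℓ,
      h #(M ∩ M') ≤ ∑ j ∈ range (ℓ + 1), ((#(M ∩ M')).choose j : ℝ) * h j := by
    intro M' _
    -- the term `j = #(M ∩ M')` alone is `h #(M ∩ M')`
    have hκ : #(M ∩ M') ∈ range (ℓ + 1) := mem_range.mpr (Nat.lt_succ_of_le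
      ((card_le_card inter_subset_left).trans (mem_matchingsOn.mp hM).2.1.le))
    refine le_of_eq_of_le ?_ (single_le_sum (fun j _ => mul_nonneg (Nat.cast_nonneg _) (hh j)) hκ)
    simp
  refine (sum_le_sum hle).trans_eq ?_
  rw [sum_comm]
  refine sum_congr rfl fun j _ => ?_
  rw [← sum_mul, ← sum_choose_card_inter hM j, Nat.cast_sum]

lemma overlapRatio_eq (hp : 0 ≤ p) (hn : n ≠ 0) :
    overlapRatio n ℓ p = 2 * ((ℓ : ℝ) / (n * √p)) ^ 2 / (1 - 2 * ((ℓ : ℝ) / n)) ^ 2 := by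
  have hn' : (n : ℝ) ≠ 0 := by exact_mod_cast hn
  rw [← mul_div_assoc (2 : ℝ) (ℓ : ℝ), one_sub_div hn', overlapRatio, div_pow, mul_pow,
    Real.sq_sqrt hp, div_pow, div_div_eq_mul_div]
  field_simp

lemma overlapCount_succ_mul_pow_le (hp0 : 0 < p) (hn : 2 * ℓ < n) {i : ℕ} (hi : i < ℓ) :
    overlapCount n ℓ (i + 1) * p ^ (2 * ℓ - (i + 1))
      ≤ overlapCount n ℓ 1 * p ^ (2 * ℓ - 1) * overlapRatio n ℓ p ^ i := by
  have hratio : 2 * ℓ ^ 2 / ((n : ℝ) - 2 * ℓ) ^ 2 = overlapRatio n ℓ p * p := by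
    rw [overlapRatio, ← div_div, div_mul_cancel₀ _ hp0.ne']
  have hpow : p ^ (2 * ℓ - 1) = p ^ (2 * ℓ - (i + 1)) * p ^ i := by
    rw [← pow_add]; congr 1; omega
  calc (overlapCount n ℓ (i + 1) : ℝ) * p ^ (2 * ℓ - (i + 1))
      ≤ overlapCount n ℓ 1 * (overlapRatio n ℓ p * p) ^ i * p ^ (2 * ℓ - (i + 1)) := by
        rw [← hratio]; gcongr; exact overlapCount_succ_le hn i
    _ = overlapCount n ℓ 1 * p ^ (2 * ℓ - 1) * overlapRatio n ℓ p ^ i := by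
        rw [hpow]; ring

theorem sum_pow_sub_overlapCount_mem_Icc (hp0 : 0 < p) (hp1 : p ≤ 1) (hn : 2 * ℓ < n)
    (hq : overlapRatio n ℓ p < 1) {M : Finset (Sym2 (Fin n))}
    (hM : M ∈ matchings n ℓ) :
    ∑ M' ∈ matchings n ℓ, (p ^ (2 * ℓ - #(M ∩ M')) - p ^ (2 * ℓ))
        - overlapCount n ℓ 1 * (p ^ (2 * ℓ - 1) * (1 - p)) ∈
      Set.Icc 0 (overlapRatio n ℓ p / (1 - overlapRatio n ℓ p) ^ 2 *
        (overlapCount n ℓ 1 * (p ^ (2 * ℓ - 1) * (1 - p)))) := by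
  set q := overlapRatio n ℓ p
  set h : ℕ → ℝ := fun j => (j - 1 : ℕ) * p ^ (2 * ℓ - j) * (1 - p)
  have hq0 : 0 ≤ q := by unfold q overlapRatio; positivity
  have hmean : (overlapCount n ℓ 1 : ℝ) = ∑ M' ∈ matchings n ℓ, (#(M ∩ M') : ℝ) := by
    rw [← sum_choose_card_inter hM 1, Nat.cast_sum]; simp only [Nat.choose_one_right]
  have hrem : ∀ M' ∈ matchings n ℓ,
      p ^ (2 * ℓ - #(M ∩ M')) - p ^ (2 * ℓ) - #(M ∩ M') * p ^ (2 * ℓ - 1) * (1 - p)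
        ∈ Set.Icc 0 (h #(M ∩ M')) := fun M' _ =>
    pow_sub_remainder_mem_Icc hp0.le hp1 ((card_le_card inter_subset_left).trans
      ((mem_matchingsOn.mp hM).2.1.le.trans (by omega)))
  have hsplit : ∑ M' ∈ matchings n ℓ,
      (p ^ (2 * ℓ - #(M ∩ M')) - p ^ (2 * ℓ)) - overlapCount n ℓ 1 * (p ^ (2 * ℓ - 1) * (1 - p))
      = ∑ M' ∈ matchings n ℓ,
          (p ^ (2 * ℓ - #(M ∩ M')) - p ^ (2 * ℓ) - #(M ∩ M') * p ^ (2 * ℓ - 1) * (1 - p)) := by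
    rw [hmean, sum_mul, ← sum_sub_distrib]
    exact sum_congr rfl fun _ _ => by ring
  rw [hsplit]
  refine ⟨sum_nonneg fun M' hM' => (hrem M' hM').1, ?_⟩
  calc _ ≤ ∑ M' ∈ matchings n ℓ, h #(M ∩ M') :=
        sum_le_sum fun M' hM' => (hrem M' hM').2
    _ ≤ ∑ j ∈ range (ℓ + 1), overlapCount n ℓ j * h j :=
        sum_le_sum_overlapCount_mul hM fun j => by
          unfold h; have := sub_nonneg.mpr hp1; positivity
    _ = ∑ i ∈ range ℓ, overlapCount n ℓ (i + 1) * p ^ (2 * ℓ - (i + 1)) * (i * (1 - p)) := by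
        rw [sum_range_succ']
        simp only [h, Nat.add_sub_cancel, zero_tsub, Nat.cast_zero, zero_mul, mul_zero, add_zero]
        exact sum_congr rfl fun _ _ => by ring
    _ ≤ ∑ i ∈ range ℓ, overlapCount n ℓ 1 * p ^ (2 * ℓ - 1) * q ^ i * (i * (1 - p)) :=
        sum_le_sum fun i hi => mul_le_mul_of_nonneg_right
          (overlapCount_succ_mul_pow_le hp0 hn (mem_range.mp hi))
          (mul_nonneg (Nat.cast_nonneg _) (sub_nonneg.mpr hp1))
    _ = overlapCount n ℓ 1 * (p ^ (2 * ℓ - 1) * (1 - p)) * ∑ i ∈ range ℓ, (i : ℝ) * q ^ i := by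
        rw [mul_sum]; exact sum_congr rfl fun _ _ => by ring
    _ ≤ overlapCount n ℓ 1 * (p ^ (2 * ℓ - 1) * (1 - p)) * (q / (1 - q) ^ 2) := by
        gcongr
        exact sum_range_mul_pow_le hq0 hq ℓ
    _ = _ := by ring

theorem abs_erVar_div_sigmaBarSq_sub_one_le (hp0 : 0 < p) (hp1 : p < 1)
    (hℓ : 1 ≤ ℓ) (hn : 2 * ℓ < n) (hq : overlapRatio n ℓ p < 1) :
    |erVar n ℓ p / sigmaBarSq n ℓ p - 1| ≤ overlapRatio n ℓ p / (1 - overlapRatio n ℓ p) ^ 2 := by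
  set ε := overlapRatio n ℓ p / (1 - overlapRatio n ℓ p) ^ 2
  set c : ℝ := overlapCount n ℓ 1 * (p ^ (2 * ℓ - 1) * (1 - p))
  have hσ : sigmaBarSq n ℓ p = ∑ _M ∈ matchings n ℓ, c := by
    rw [sum_const, card_matchingsOn, Finset.card_univ, Fintype.card_fin, nsmul_eq_mul,
      sigmaBarSq_eq hℓ, mul_assoc]
  have hσpos : 0 < sigmaBarSq n ℓ p := by
    rw [sigmaBarSq_eq hℓ]
    have h1 := numMatchings_pos (show 2 * ℓ ≤ n by omega)
    have h2 : 0 < overlapCount n ℓ 1 :=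
      Nat.mul_pos (by simp; omega) (numMatchings_pos (by omega))
    have h3 : 0 < 1 - p := by linarith
    positivity
  have hdiff : erVar n ℓ p - sigmaBarSq n ℓ p ∈ Set.Icc 0 (ε * sigmaBarSq n ℓ p) := by
    rw [erVar_eq_sum, hσ, mul_sum, ← sum_sub_distrib]
    exact ⟨sum_nonneg fun M hM => (sum_pow_sub_overlapCount_mem_Icc hp0 hp1.le hn hq hM).1,
      sum_le_sum fun M hM => (sum_pow_sub_overlapCount_mem_Icc hp0 hp1.le hn hq hM).2⟩
  rw [← div_self hσpos.ne', ← sub_div, abs_div, abs_of_pos hσpos, div_le_iff₀ hσpos,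
    abs_of_nonneg hdiff.1]
  exact hdiff.2

end Estimate

open Filter Topology Asymptotics

section Limits

variable {p : ℕ → ℝ} {ℓ : ℕ → ℕ}

lemma tendsto_div_natCast_of_isLittleO (hp0 : ∀ n, 0 < p n) (hp1 : ∀ n, p n ≤ 1)
    (ho : (fun n => (ℓ n : ℝ)) =o[atTop] fun n => (n : ℝ) * √(p n)) :
    Tendsto (fun n => (ℓ n : ℝ) / n) atTop (𝓝 0) := by
  refine squeeze_zero' (Eventually.of_forall fun n => by positivity) ?_ ho.tendsto_div_nhds_zero
  filter_upwards [eventually_gt_atTop 0] with n hn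
  have hsqrt : 0 < √(p n) := Real.sqrt_pos.mpr (hp0 n)
  exact div_le_div_of_nonneg_left (Nat.cast_nonneg _) (by positivity)
    (mul_le_of_le_one_right (Nat.cast_nonneg _) (Real.sqrt_le_one.mpr (hp1 n)))

lemma tendsto_overlapRatio (hp0 : ∀ n, 0 < p n) (hp1 : ∀ n, p n ≤ 1)
    (ho : (fun n => (ℓ n : ℝ)) =o[atTop] fun n => (n : ℝ) * √(p n)) :
    Tendsto (fun n => overlapRatio n (ℓ n) (p n)) atTop (𝓝 0) := by
  have hlim := (ho.tendsto_div_nhds_zero.pow 2).const_mul 2 |>.div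
    (((tendsto_div_natCast_of_isLittleO hp0 hp1 ho).const_mul 2).const_sub 1 |>.pow 2)
    (by norm_num)
  simp only [ne_eq, OfNat.ofNat_ne_zero, not_false_eq_true, zero_pow, mul_zero, sub_zero, one_pow,
    div_one] at hlim
  refine hlim.congr' ?_
  filter_upwards [eventually_ne_atTop 0] with n hn
  exact (overlapRatio_eq (hp0 n).le hn).symm

end Limits

open Filter Asymptotics in
theorem variance_asymptotics_general (p : ℕ → ℝ) (ℓ : ℕ → ℕ)
    (hp : ∀ n, 0 < p n ∧ p n < 1)
    (hℓ1 : ∀ n, 1 ≤ ℓ n)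
    (ho : (fun n => (ℓ n : ℝ)) =o[atTop] fun n => (n : ℝ) * Real.sqrt (p n)) :
    Tendsto (fun n => erVar n (ℓ n) (p n) / sigmaBarSq n (ℓ n) (p n)) atTop (nhds 1) := by
  have hp0 n := (hp n).1
  have hp1 n := (hp n).2.le
  have hq := tendsto_overlapRatio hp0 hp1 ho
  have hε : Tendsto (fun n => overlapRatio n (ℓ n) (p n) / (1 - overlapRatio n (ℓ n) (p n)) ^ 2)
      atTop (𝓝 0) := by
    rw [show (0 : ℝ) = 0 / (1 - 0) ^ 2 by norm_num]
    exact hq.div ((tendsto_const_nhds.sub hq).pow 2) (by norm_num)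
  rw [tendsto_iff_norm_sub_tendsto_zero]
  refine squeeze_zero' (Eventually.of_forall fun _ => norm_nonneg _) ?_ hε
  filter_upwards [hq.eventually (gt_mem_nhds one_pos), eventually_gt_atTop 0,
    (tendsto_div_natCast_of_isLittleO hp0 hp1 ho).eventually (gt_mem_nhds one_half_pos)]
    with n hq1 hn hℓn
  have h2ℓ : 2 * ℓ n < n := by
    rw [div_lt_iff₀ (by exact_mod_cast hn)] at hℓn
    exact_mod_cast (by linarith : (2 * ℓ n : ℝ) < n)
  exact abs_erVar_div_sigmaBarSq_sub_one_le (hp n).1 (hp n).2 (hℓ1 n) h2ℓ hq1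

open Filter Asymptotics in
/-- If `1 - p = Ω(1)` and `ℓ = o(n√p)`, then `Var(X_{n,ℓ}) ~ σ̄²`. -/
theorem variance_asymptotics (p : ℕ → ℝ) (ℓ : ℕ → ℕ)
    (hp : ∀ n, 0 < p n ∧ p n < 1)
    (hΩ : ∃ c > 0, ∀ᶠ n in atTop, c ≤ 1 - p n)
    (hℓ1 : ∀ n, 1 ≤ ℓ n)
    (ho : (fun n => (ℓ n : ℝ)) =o[atTop] fun n => (n : ℝ) * Real.sqrt (p n)) :
    Tendsto (fun n => erVar n (ℓ n) (p n) / sigmaBarSq n (ℓ n) (p n)) atTop (nhds 1) :=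
  variance_asymptotics_general p ℓ hp hℓ1 ho
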